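/- arXiv:2105.12282 — 3 statements merged into one kernel-verified Lean document; each statement's English description precedes it below -/
import Mathlib

section
/- (Functoriality of ev_ℝ on composition of spans) Let P, W, Q, W', R be finite types with functions f : W → P, g : W → Q, f' : W' → Q, g' : W' → R. Let Z = {(w, w') : W × W' // g w = f' w'} be the pullback with projections π : Z → W and π' : Z → W', so that the composite span is P ← Z → R with legs f ∘ π and g' ∘ π'. Then g'_* ∘ f'^* ∘ g_* ∘ f^* = (g' ∘ π')_* ∘ (f ∘ π)^* as maps (P → ℝ) → (R → ℝ). -/
/-!
The composite `g'_* ∘ f'^* ∘ g_* ∘ f^*` contains `f'^* ∘ g_*`, and pulling back a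
pushforward through the pullback square is the same as pushing forward a pullback
(base change): the fiber of `g` over `f' w'` is in bijection with the fiber of the
projection `Z → W'` over `w'`. After this exchange, functoriality of `(·)_*` and `(·)^*`
finishes the proof.
-/

/-- Pushforward along `f : α → β`: sum over fibers. -/
noncomputable def pushforward {α β : Type*} [Fintype α] [DecidableEq β]
    (f : α → β) (y : α → ℝ) : β → ℝ :=
  fun b => ∑ a : α, if f a = b then y a else 0

/-- Pullback along `f : α → β`: precomposition. -/
def pullback {α β : Type*} (f : α → β) (x : β → ℝ) : α → ℝ := x ∘ f

theorem pullback_comp {α β γ : Type*} (g : β → γ) (h : α → β) :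
    pullback (g ∘ h) = pullback h ∘ pullback g :=
  rfl

theorem pushforward_comp {α β γ : Type*} [Fintype α] [Fintype β] [DecidableEq β]
    [DecidableEq γ] (g : β → γ) (h : α → β) :
    pushforward (g ∘ h) = pushforward g ∘ pushforward h := by
  funext y c
  simp only [pushforward, Function.comp_apply, ← Finset.sum_filter]
  rw [← Finset.sum_fiberwise_of_maps_to (g := h) (t := Finset.univ.filter (g · = c)) (by simp)]
  refine Finset.sum_congr rfl fun b hb => Finset.sum_congr ?_ fun _ _ => rfl
  ext a
  simp_all

theorem pullback_comp_pushforward {W Q W' : Type*} [Fintype W] [Fintype W'] [DecidableEq Q]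
    [DecidableEq W'] (g : W → Q) (f' : W' → Q) :
    pullback f' ∘ pushforward g
      = pushforward (fun z : {p : W × W' // g p.1 = f' p.2} => z.val.2)
          ∘ pullback (fun z : {p : W × W' // g p.1 = f' p.2} => z.val.1) := by
  funext y w'
  simp only [pushforward, pullback, Function.comp_apply, ← Finset.sum_filter]
  exact Finset.sum_bij' (fun w hw => ⟨(w, w'), by simpa using hw⟩) (fun z _ => z.val.1)
    (by simp) (by aesop) (by simp) (by aesop) (by simp)

theorem ev_real_comp_spans_general {P W Q W' R : Type*}
    [Fintype W] [Fintype W']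
    [DecidableEq Q] [DecidableEq R]
    (f : W → P) (g : W → Q) (f' : W' → Q) (g' : W' → R) :
    pushforward g' ∘ pullback f' ∘ pushforward g ∘ pullback f
      = pushforward (fun z : {p : W × W' // g p.1 = f' p.2} => g' z.val.2)
          ∘ pullback (fun z : {p : W × W' // g p.1 = f' p.2} => f z.val.1) := by
  classical
  let π : {p : W × W' // g p.1 = f' p.2} → W := fun z => z.val.1
  let π' : {p : W × W' // g p.1 = f' p.2} → W' := fun z => z.val.2
  calc pushforward g' ∘ (pullback f' ∘ pushforward g) ∘ pullback f
      = pushforward g' ∘ (pushforward π' ∘ pullback π) ∘ pullback f := by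
        rw [pullback_comp_pushforward]
    _ = (pushforward g' ∘ pushforward π') ∘ (pullback π ∘ pullback f) := rfl
    _ = pushforward (g' ∘ π') ∘ pullback (f ∘ π) := by
        rw [pushforward_comp, pullback_comp]

theorem ev_real_comp_spans {P W Q W' R : Type*}
    [Fintype P] [Fintype W] [Fintype Q] [Fintype W'] [Fintype R]
    [DecidableEq Q] [DecidableEq R]
    (f : W → P) (g : W → Q) (f' : W' → Q) (g' : W' → R) :
    pushforward g' ∘ pullback f' ∘ pushforward g ∘ pullback f
      = pushforward (fun z : {p : W × W' // g p.1 = f' p.2} => g' z.val.2)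
          ∘ pullback (fun z : {p : W × W' // g p.1 = f' p.2} => f z.val.1) :=
  ev_real_comp_spans_general f g f' g'
end

section
/- (Functoriality of the discrete undirected composition) For finite types S, T, U, functions q : S → T and q' : T → U, and any map u : (S → ℝ) → (S → ℝ), define Φ_q(u) : (T → ℝ) → (T → ℝ) by Φ_q(u)(x) = x + q_*(u(q^* x) - q^* x). Then Φ_{q'}(Φ_q(u)) = Φ_{q' ∘ q}(u). -/
/-- Transport of a discrete update map along `q`. -/
noncomputable def Phi {S T : Type*} [Fintype S] [DecidableEq T]
    (q : S → T) (u : (S → ℝ) → (S → ℝ)) : (T → ℝ) → (T → ℝ) :=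
  fun x => x + pushforward q (u (pullback q x) - pullback q x)

lemma pullback_comp_s6 {S T U : Type*} (q : S → T) (q' : T → U) (x : U → ℝ) :
    pullback q (pullback q' x) = pullback (q' ∘ q) x :=
  rfl

lemma pushforward_comp_s6 {S T U : Type*} [Fintype S] [Fintype T]
    [DecidableEq T] [DecidableEq U] (q : S → T) (q' : T → U) (y : S → ℝ) :
    pushforward q' (pushforward q y) = pushforward (q' ∘ q) y := by
  funext c
  simp only [pushforward, Function.comp_apply]
  calc ∑ t, (if q' t = c then ∑ s, if q s = t then y s else 0 else 0)
      = ∑ t, ∑ s, if q s = t then (if q' t = c then y s else 0) else 0 := by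
        refine Finset.sum_congr rfl fun t _ => ?_
        split_ifs <;> simp_all
    _ = ∑ s, if q' (q s) = c then y s else 0 := by
        rw [Finset.sum_comm]
        simp only [Finset.sum_ite_eq, Finset.mem_univ, if_true]

theorem Phi_comp_general {S T U : Type*} [Fintype S] [Fintype T]
    [DecidableEq T] [DecidableEq U] (q : S → T) (q' : T → U)
    (u : (S → ℝ) → (S → ℝ)) :
    Phi q' (Phi q u) = Phi (q' ∘ q) u := by
  funext x
  simp only [Phi, pullback_comp_s6, add_sub_cancel_left, pushforward_comp_s6]

theorem Phi_comp {S T U : Type*} [Fintype S] [Fintype T] [Fintype U]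
    [DecidableEq T] [DecidableEq U] (q : S → T) (q' : T → U)
    (u : (S → ℝ) → (S → ℝ)) :
    Phi q' (Phi q u) = Phi (q' ∘ q) u :=
  Phi_comp_general q q' u
end

section
/- (Euler's method is natural for undirected systems) Let S, T be finite types, q : S → T a function, h : ℝ, and v : (S → ℝ) → (S → ℝ). Define Euler_h(v)(x) = x + h • v(x), Φ_q(u)(x) = x + q_*(u(q^* x) - q^* x), and Ψ_q(v) = q_* ∘ v ∘ q^*. Then Φ_q(Euler_h(v)) = Euler_h(Ψ_q(v)) as maps (T → ℝ) → (T → ℝ). -/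
/-- One Euler step of size `h`. -/
def euler {S : Type*} (h : ℝ) (v : (S → ℝ) → (S → ℝ)) : (S → ℝ) → (S → ℝ) :=
  fun x => x + h • v x

/-- Transport of a vector field along `q`. -/
noncomputable def Psi {S T : Type*} [Fintype S] [DecidableEq T]
    (q : S → T) (v : (S → ℝ) → (S → ℝ)) : (T → ℝ) → (T → ℝ) :=
  pushforward q ∘ v ∘ pullback q

theorem pushforward_smul {α β : Type*} [Fintype α] [DecidableEq β]
    (f : α → β) (c : ℝ) (y : α → ℝ) :
    pushforward f (c • y) = c • pushforward f y := by
  funext b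
  simp only [pushforward, Pi.smul_apply, smul_eq_mul, Finset.mul_sum, mul_ite, mul_zero]

theorem euler_sub_self {S : Type*} (h : ℝ) (v : (S → ℝ) → (S → ℝ)) (x : S → ℝ) :
    euler h v x - x = h • v x :=
  add_sub_cancel_left x _

theorem euler_natural_undirected {S T : Type*} [Fintype S] [DecidableEq T]
    (q : S → T) (h : ℝ) (v : (S → ℝ) → (S → ℝ)) :
    Phi q (euler h v) = euler h (Psi q v) := by
  funext x
  rw [Phi, euler_sub_self, pushforward_smul]
  rfl
end
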